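/- Let p ≥ 1 be a real number, l and N positive integers, and set M = ⌊l/2^p⌋. If M ≤ N, then the number of vectors u ∈ ℤ^N all of whose coordinates are even and which satisfy Σᵢ |uᵢ|^p ≤ l is at most C(N, M)·(l+1)^M, where C(N, M) is a binomial coefficient. -/

import Mathlib

/-!
A nonzero even integer has `|uᵢ|^p ≥ 2^p`, so a vector in the set has at most
`M = ⌊l/2^p⌋` nonzero coordinates. Each coordinate is `2k` with `2^p |k| ≤ 2^p |k|^p ≤ l`,
so it is one of the `2M + 1 ≤ l + 1` even integers in `[-2M, 2M]`. Choosing an `M`-set of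
coordinates containing the support, and then the values on it, gives `C(N, M) (l + 1)^M`.
-/

open Finset

section SparseBox

variable {ι α : Type*} [Fintype ι] [DecidableEq ι] [DecidableEq α] [Zero α]

def sparseBox (M : ℕ) (V : Finset α) : Finset (ι → α) :=
  (univ.powersetCard M).biUnion fun T => Fintype.piFinset fun i => if i ∈ T then V else {0}

theorem card_sparseBox_le (M : ℕ) (V : Finset α) :
    #(sparseBox (ι := ι) M V) ≤ (Fintype.card ι).choose M * #V ^ M := by
  calc #(sparseBox (ι := ι) M V)
      ≤ ∑ T ∈ univ.powersetCard M, #(Fintype.piFinset fun i => if i ∈ T then V else {0}) :=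
        card_biUnion_le
    _ = ∑ _T ∈ univ.powersetCard M, #V ^ M := by
        refine sum_congr rfl fun T hT => ?_
        simp only [Fintype.card_piFinset, apply_ite Finset.card, card_singleton,
          prod_ite_mem, univ_inter, prod_const, (mem_powersetCard.mp hT).2]
    _ = (Fintype.card ι).choose M * #V ^ M := by
        rw [sum_const, smul_eq_mul, card_powersetCard, card_univ]

theorem mem_sparseBox {M : ℕ} {V : Finset α} {u : ι → α} (hM : M ≤ Fintype.card ι)
    (hsupp : #{i | u i ≠ 0} ≤ M) (hV : ∀ i, u i ∈ V) : u ∈ sparseBox M V := by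
  obtain ⟨T, hsT, hT⟩ := exists_superset_card_eq hsupp (by simpa using hM)
  refine mem_biUnion.mpr ⟨T, mem_powersetCard.mpr ⟨subset_univ T, hT⟩, ?_⟩
  refine Fintype.mem_piFinset.mpr fun i => ?_
  by_cases hi : i ∈ T
  · simpa [hi] using hV i
  · simpa [hi] using not_not.mp fun h => hi (hsT (mem_filter.mpr ⟨mem_univ i, h⟩))

end SparseBox

theorem Int.two_le_abs_of_even {k : ℤ} (he : Even k) (h0 : k ≠ 0) : 2 ≤ |k| := by
  obtain ⟨j, rfl⟩ := he
  have : j ≠ 0 := by rintro rfl; simp at h0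
  rw [← two_mul, abs_mul, abs_two]
  have := Int.one_le_abs this
  omega

section EvenLattice

variable {p L : ℝ}

theorem two_rpow_le_abs_rpow_of_even (hp : 0 ≤ p) {k : ℤ} (he : Even k) (h0 : k ≠ 0) :
    (2 : ℝ) ^ p ≤ |(k : ℝ)| ^ p := by
  refine Real.rpow_le_rpow zero_le_two ?_ hp
  exact_mod_cast Int.two_le_abs_of_even he h0

theorem card_support_le_floor_of_even {ι : Type*} [Fintype ι] (hp : 0 ≤ p) {u : ι → ℤ}
    (heven : ∀ i, Even (u i)) (hsum : ∑ i, |(u i : ℝ)| ^ p ≤ L) :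
    #{i | u i ≠ 0} ≤ ⌊L / 2 ^ p⌋₊ := by
  refine Nat.le_floor ((le_div_iff₀ (by positivity)).mpr ?_)
  calc (#{i | u i ≠ 0} : ℝ) * 2 ^ p = ∑ i ∈ {i | u i ≠ 0}, (2 : ℝ) ^ p := by
        rw [sum_const, nsmul_eq_mul]
    _ ≤ ∑ i ∈ {i | u i ≠ 0}, |(u i : ℝ)| ^ p :=
        sum_le_sum fun i hi => two_rpow_le_abs_rpow_of_even hp (heven i) (mem_filter.mp hi).2
    _ ≤ ∑ i, |(u i : ℝ)| ^ p :=
        sum_le_sum_of_subset_of_nonneg (subset_univ _) fun i _ _ => by positivity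
    _ ≤ L := hsum

theorem natAbs_le_floor_of_abs_two_mul_rpow_le (hp : 1 ≤ p) {k : ℤ}
    (h : |((2 * k : ℤ) : ℝ)| ^ p ≤ L) : k.natAbs ≤ ⌊L / 2 ^ p⌋₊ := by
  rcases eq_or_ne k 0 with rfl | hk
  · simp
  refine Nat.le_floor ((le_div_iff₀ (by positivity)).mpr ?_)
  have hk1 : (1 : ℝ) ≤ |(k : ℝ)| := by exact_mod_cast Int.one_le_abs hk
  calc (k.natAbs : ℝ) * 2 ^ p = 2 ^ p * |(k : ℝ)| := by rw [Nat.cast_natAbs, mul_comm]; simp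
    _ ≤ 2 ^ p * |(k : ℝ)| ^ p := by
        gcongr
        exact Real.self_le_rpow_of_one_le hk1 hp
    _ = |((2 * k : ℤ) : ℝ)| ^ p := by
        rw [← Real.mul_rpow zero_le_two (abs_nonneg _)]
        push_cast
        rw [abs_mul, abs_two]
    _ ≤ L := h

theorem two_mul_floor_div_two_rpow_le (hp : 1 ≤ p) (hL : 0 ≤ L) :
    2 * (⌊L / 2 ^ p⌋₊ : ℝ) ≤ L := by
  have h2p : (2 : ℝ) ≤ 2 ^ p := by
    simpa using Real.rpow_le_rpow_of_exponent_le one_le_two hp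
  calc 2 * (⌊L / 2 ^ p⌋₊ : ℝ) ≤ 2 ^ p * (L / 2 ^ p) := by
        gcongr
        exact Nat.floor_le (by positivity)
    _ = L := mul_div_cancel₀ L (by positivity)

end EvenLattice

theorem stmt16 (p : ℝ) (hp : 1 ≤ p) (l N : ℕ)
    (M : ℕ) (hM : M = Nat.floor ((l : ℝ) / (2 : ℝ) ^ p)) (hMN : M ≤ N) :
    Set.ncard {u : Fin N → ℤ | (∀ i, Even (u i)) ∧ ∑ i, |(u i : ℝ)| ^ p ≤ (l : ℝ)} ≤
      N.choose M * (l + 1) ^ M := by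
  have h2M : 2 * M ≤ l := by
    exact_mod_cast hM ▸ two_mul_floor_div_two_rpow_le hp (Nat.cast_nonneg l)
  set V : Finset ℤ := (Icc (-(M : ℤ)) M).image (2 * ·)
  have hV : #V ≤ l + 1 := card_image_le.trans (by rw [Int.card_Icc]; omega)
  have hsub : {u : Fin N → ℤ | (∀ i, Even (u i)) ∧ ∑ i, |(u i : ℝ)| ^ p ≤ (l : ℝ)} ⊆
      ↑(sparseBox (ι := Fin N) M V) := by
    rintro u ⟨heven, hsum⟩
    refine mem_sparseBox (by simpa using hMN)
      (hM ▸ card_support_le_floor_of_even (by linarith) heven hsum) fun i => ?_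
    obtain ⟨k, hk⟩ := heven i
    have hki : |((2 * k : ℤ) : ℝ)| ^ p ≤ l := by
      rw [two_mul, ← hk]
      exact (single_le_sum (fun j _ => by positivity) (mem_univ i)).trans hsum
    have hkM := hM ▸ natAbs_le_floor_of_abs_two_mul_rpow_le hp hki
    exact mem_image.mpr ⟨k, mem_Icc.mpr (by omega), by omega⟩
  calc _ ≤ #(sparseBox M V) := by
        simpa using Set.ncard_le_ncard hsub (sparseBox M V).finite_toSet
    _ ≤ (Fintype.card (Fin N)).choose M * #V ^ M := card_sparseBox_le M V
    _ ≤ N.choose M * (l + 1) ^ M := by rw [Fintype.card_fin]; gcongr
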